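/- arXiv:1207.4242 — 5 statements merged into one kernel-verified Lean document; each statement's English description precedes it below -/
import Mathlib

section
/- Let γ > 1, μ = (1-1/γ)², and f(z) = -μ z + log z - (1/γ²) log(z - 1). For z = 1 + R e^{-iθ} with R > 0 and θ ∈ (0, π), the derivative of Re(f(z)) with respect to θ equals [R sin θ / (1 + R² + 2R cos θ)] · [μ(1 + R² + 2R cos θ) - 1], and if R < 1/√μ - 1 then this derivative is negative for all θ ∈ (0, π). -/
/-!
On the circle `|z - 1| = R` the term `log |z - 1|` is constant, `Re z = 1 + R cos θ` and
`|z|² = 1 + R² + 2 R cos θ`, so `Re f` is an explicit real function of `θ` that can be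
differentiated directly. For the sign, `sin θ > 0` on `(0, π)` and
`μ (1 + R² + 2 R cos θ) ≤ μ (1 + R)² < 1`.
-/

open Complex

lemma re_one_add_mul_exp_neg_mul_I (R s : ℝ) :
    (1 + (R : ℂ) * exp (-(s : ℂ) * I)).re = 1 + R * Real.cos s := by
  simp [exp_re, exp_im]

lemma normSq_one_add_mul_exp_neg_mul_I (R s : ℝ) :
    normSq (1 + (R : ℂ) * exp (-(s : ℂ) * I)) = 1 + R ^ 2 + 2 * R * Real.cos s := by
  simp [normSq_apply, exp_re, exp_im]
  linear_combination R ^ 2 * Real.sin_sq_add_cos_sq s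

lemma norm_mul_exp_neg_mul_I (R s : ℝ) : ‖(R : ℂ) * exp (-(s : ℂ) * I)‖ = |R| := by
  simp [norm_exp]

lemma log_norm_eq_log_normSq_div_two (z : ℂ) : Real.log ‖z‖ = Real.log (normSq z) / 2 := by
  rw [normSq_eq_norm_sq, Real.log_pow]
  push_cast
  ring

lemma re_neg_mul_add_log_sub_mul_log (μ c : ℝ) (z : ℂ) :
    (-(μ : ℂ) * z + log z - (c : ℂ) * log (z - 1)).re
      = -μ * z.re + Real.log ‖z‖ - c * Real.log ‖z - 1‖ := by
  simp [log_re]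

lemma re_on_arc (μ c R s : ℝ) :
    (-(μ : ℂ) * (1 + R * exp (-(s : ℂ) * I)) + log (1 + R * exp (-(s : ℂ) * I))
        - (c : ℂ) * log (1 + R * exp (-(s : ℂ) * I) - 1)).re
      = -μ * (1 + R * Real.cos s) + Real.log (1 + R ^ 2 + 2 * R * Real.cos s) / 2
        - c * Real.log R := by
  rw [re_neg_mul_add_log_sub_mul_log, re_one_add_mul_exp_neg_mul_I,
    log_norm_eq_log_normSq_div_two, normSq_one_add_mul_exp_neg_mul_I, add_sub_cancel_left,
    norm_mul_exp_neg_mul_I, Real.log_abs]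

lemma hasDerivAt_re_on_arc (μ c R θ : ℝ) (hA : 1 + R ^ 2 + 2 * R * Real.cos θ ≠ 0) :
    HasDerivAt (fun s : ℝ => -μ * (1 + R * Real.cos s)
        + Real.log (1 + R ^ 2 + 2 * R * Real.cos s) / 2 - c)
      (R * Real.sin θ / (1 + R ^ 2 + 2 * R * Real.cos θ)
        * (μ * (1 + R ^ 2 + 2 * R * Real.cos θ) - 1)) θ := by
  have hcos := Real.hasDerivAt_cos θ
  have hlog := ((hcos.const_mul (2 * R)).const_add (1 + R ^ 2)).log hA
  refine ((((hcos.const_mul R).const_add 1).const_mul (-μ)).add (hlog.div_const 2)).sub_const c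
    |>.congr_deriv ?_
  generalize 1 + R ^ 2 + 2 * R * Real.cos θ = A at hA ⊢
  field_simp
  ring

lemma one_add_sq_add_two_mul_cos_pos (R : ℝ) {θ : ℝ} (hθ : Real.sin θ ≠ 0) :
    0 < 1 + R ^ 2 + 2 * R * Real.cos θ := by
  have h : 1 + R ^ 2 + 2 * R * Real.cos θ = (R + Real.cos θ) ^ 2 + Real.sin θ ^ 2 := by
    linear_combination -Real.sin_sq_add_cos_sq θ
  rw [h]
  exact add_pos_of_nonneg_of_pos (sq_nonneg _) (pow_two_pos_of_ne_zero hθ)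

lemma mul_lt_one_of_le_sq_of_lt_one_div_sqrt {μ a x : ℝ} (ha : a ≤ x ^ 2) (hx : 0 < x)
    (h : x < 1 / √μ) : μ * a < 1 := by
  have hs : 0 < √μ := one_div_pos.mp (hx.trans h)
  have hμ : 0 < μ := Real.sqrt_pos.mp hs
  calc μ * a ≤ μ * x ^ 2 := mul_le_mul_of_nonneg_left ha hμ.le
    _ = (x * √μ) ^ 2 := by rw [mul_pow, Real.sq_sqrt hμ.le, mul_comm]
    _ < 1 := pow_lt_one₀ (by positivity) ((lt_div_iff₀ hs).mp h) two_ne_zero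

theorem deriv_re_f_on_arc_general (γ : ℝ)
    (μ : ℝ)
    (f : ℂ → ℂ)
    (hf : ∀ z : ℂ, f z = -(μ:ℂ) * z + Complex.log z
        - (1/(γ:ℂ)^2) * Complex.log (z - 1))
    (R : ℝ) (hR : 0 < R)
    (θ : ℝ) (hθ0 : 0 < θ) (hθπ : θ < Real.pi) :
    deriv (fun s : ℝ => (f (1 + (R:ℂ) * Complex.exp (-(s:ℂ) * Complex.I))).re) θ
      = (R * Real.sin θ / (1 + R^2 + 2*R*Real.cos θ)) *
          (μ * (1 + R^2 + 2*R*Real.cos θ) - 1) ∧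
    (R < 1 / Real.sqrt μ - 1 →
      deriv (fun s : ℝ =>
        (f (1 + (R:ℂ) * Complex.exp (-(s:ℂ) * Complex.I))).re) θ < 0) := by
  have hsin : 0 < Real.sin θ := Real.sin_pos_of_pos_of_lt_pi hθ0 hθπ
  have hA := one_add_sq_add_two_mul_cos_pos R hsin.ne'
  have hc : (1 : ℂ) / (γ : ℂ) ^ 2 = ((1 / γ ^ 2 : ℝ) : ℂ) := by push_cast; rfl
  have hre : (fun s : ℝ => (f (1 + (R : ℂ) * exp (-(s : ℂ) * I))).re) = fun s =>
      -μ * (1 + R * Real.cos s) + Real.log (1 + R ^ 2 + 2 * R * Real.cos s) / 2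
        - 1 / γ ^ 2 * Real.log R := by
    funext s
    rw [hf, hc, re_on_arc]
  have hderiv := (hre ▸ hasDerivAt_re_on_arc μ (1 / γ ^ 2 * Real.log R) R θ hA.ne').deriv
  refine ⟨hderiv, fun hRμ => hderiv ▸ mul_neg_of_pos_of_neg (by positivity) (sub_neg.mpr ?_)⟩
  exact mul_lt_one_of_le_sq_of_lt_one_div_sqrt (x := 1 + R) (by nlinarith [Real.cos_le_one θ])
    (by positivity) (by linarith)

theorem deriv_re_f_on_arc (γ : ℝ) (hγ : 1 < γ)
    (μ : ℝ) (hμ : μ = (1 - 1/γ)^2)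
    (f : ℂ → ℂ)
    (hf : ∀ z : ℂ, f z = -(μ:ℂ) * z + Complex.log z
        - (1/(γ:ℂ)^2) * Complex.log (z - 1))
    (R : ℝ) (hR : 0 < R)
    (θ : ℝ) (hθ0 : 0 < θ) (hθπ : θ < Real.pi) :
    deriv (fun s : ℝ => (f (1 + (R:ℂ) * Complex.exp (-(s:ℂ) * Complex.I))).re) θ
      = (R * Real.sin θ / (1 + R^2 + 2*R*Real.cos θ)) *
          (μ * (1 + R^2 + 2*R*Real.cos θ) - 1) ∧
    (R < 1 / Real.sqrt μ - 1 →
      deriv (fun s : ℝ =>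
        (f (1 + (R:ℂ) * Complex.exp (-(s:ℂ) * Complex.I))).re) θ < 0) :=
  deriv_re_f_on_arc_general γ μ f hf R hR θ hθ0 hθπ
end

section
/- Let γ > 1, p = γ/(γ-1), μ = (1-1/γ)², and f(z) = -μ z + log z - (1/γ²) log(z-1). For ω = p + t e^{iπ/3} with 0 ≤ t ≤ 1, the derivative of Re(f(ω)) with respect to t equals - t² (t² - (2p-1)t - 2p² + 2p) / (2p² (t² + pt + p²)(t² + (p-1)t + (p-1)²)), and this is nonnegative for t ∈ [0,1]; hence Re(f) is increasing along this ray. -/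
/-! On the ray `ω = p + s e^{iπ/3}` both `|ω|²` and `|ω - 1|²` are real quadratics in `s`
(`s² + a s + a²` with `a = p`, resp. `a = p - 1`), and `Re log z = log |z|² / 2`, so
`Re f(ω)` is an explicit real function of `s`. Differentiating it and substituting
`μ = 1/p²`, `1/γ² = ((p-1)/p)²` gives the rational expression, whose numerator
`t² (t² - (2p-1)t - 2p(p-1))` is `≤ 0` on `[0,1]` because `t² ≤ t ≤ (2p-1)t` there. -/

open Complex Real

lemma exp_pi_mul_I_div_three : exp (π * I / 3) = 1 / 2 + (√3 / 2 : ℝ) * I := by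
  rw [show (π * I / 3 : ℂ) = ((π / 3 : ℝ) : ℂ) * I by push_cast; ring, exp_mul_I,
    ← ofReal_cos, ← ofReal_sin, Real.cos_pi_div_three, Real.sin_pi_div_three]
  push_cast; ring

lemma normSq_ofReal_add_mul_exp_pi_mul_I_div_three (a s : ℝ) :
    normSq (a + s * exp (π * I / 3)) = s ^ 2 + a * s + a ^ 2 := by
  have h3 : √3 ^ 2 = 3 := Real.sq_sqrt (by norm_num)
  rw [exp_pi_mul_I_div_three, normSq_apply]
  simp
  linear_combination (s ^ 2 / 4) * h3

lemma re_log_eq_log_normSq_div_two (z : ℂ) : (log z).re = Real.log (normSq z) / 2 := by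
  rw [log_re, normSq_eq_norm_sq, Real.log_pow]; push_cast; ring

lemma sq_add_mul_add_sq_pos {a : ℝ} (ha : a ≠ 0) (t : ℝ) : 0 < t ^ 2 + a * t + a ^ 2 := by
  nlinarith [sq_nonneg (t + a / 2), sq_pos_of_ne_zero ha]

lemma hasDerivAt_log_sq_add_mul_add_sq_div_two {a : ℝ} (ha : a ≠ 0) (t : ℝ) :
    HasDerivAt (fun s ↦ Real.log (s ^ 2 + a * s + a ^ 2) / 2)
      ((2 * t + a) / (t ^ 2 + a * t + a ^ 2) / 2) t := by
  have hq : HasDerivAt (fun s ↦ s ^ 2 + a * s + a ^ 2) (2 * t + a) t := by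
    simpa using ((hasDerivAt_pow 2 t).add ((hasDerivAt_id t).const_mul a)).add_const (a ^ 2)
  exact (hq.log (sq_add_mul_add_sq_pos ha t).ne').div_const 2

lemma re_along_ray_eq (μ c p s : ℝ) :
    (-(μ : ℂ) * (p + s * exp (π * I / 3)) + log (p + s * exp (π * I / 3))
        - c * log (p + s * exp (π * I / 3) - 1)).re
      = -μ * (p + s / 2) + Real.log (s ^ 2 + p * s + p ^ 2) / 2
        - c * (Real.log (s ^ 2 + (p - 1) * s + (p - 1) ^ 2) / 2) := by
  have hsub : (p : ℂ) + s * exp (π * I / 3) - 1 = ((p - 1 : ℝ) : ℂ) + s * exp (π * I / 3) := by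
    push_cast; ring
  rw [sub_re, add_re, re_ofReal_mul, re_log_eq_log_normSq_div_two,
    re_log_eq_log_normSq_div_two, hsub, normSq_ofReal_add_mul_exp_pi_mul_I_div_three,
    normSq_ofReal_add_mul_exp_pi_mul_I_div_three, exp_pi_mul_I_div_three]
  simp [div_eq_mul_inv]

lemma hasDerivAt_re_along_ray (μ c : ℝ) {p : ℝ} (hp0 : p ≠ 0) (hp1 : p ≠ 1) (t : ℝ) :
    HasDerivAt (fun s : ℝ ↦ (-(μ : ℂ) * (p + s * exp (π * I / 3)) + log (p + s * exp (π * I / 3))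
        - c * log (p + s * exp (π * I / 3) - 1)).re)
      (-μ / 2 + (2 * t + p) / (t ^ 2 + p * t + p ^ 2) / 2
        - c * ((2 * t + (p - 1)) / (t ^ 2 + (p - 1) * t + (p - 1) ^ 2) / 2)) t := by
  simp_rw [re_along_ray_eq]
  have hlin : HasDerivAt (fun s : ℝ ↦ -μ * (p + s / 2)) (-μ / 2) t :=
    ((((hasDerivAt_id t).div_const 2).const_add p).const_mul (-μ)).congr_deriv (by ring)
  exact (hlin.add (hasDerivAt_log_sq_add_mul_add_sq_div_two hp0 t)).sub
    ((hasDerivAt_log_sq_add_mul_add_sq_div_two (sub_ne_zero.2 hp1) t).const_mul c)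

lemma ray_deriv_eq_div {p : ℝ} (hp0 : p ≠ 0) (hp1 : p ≠ 1) (t : ℝ) :
    -(1 / p ^ 2) / 2 + (2 * t + p) / (t ^ 2 + p * t + p ^ 2) / 2
        - (p - 1) ^ 2 / p ^ 2 * ((2 * t + (p - 1)) / (t ^ 2 + (p - 1) * t + (p - 1) ^ 2) / 2)
      = -(t^2 * (t^2 - (2*p - 1)*t - 2*p^2 + 2*p)) /
          (2 * p^2 * (t^2 + p*t + p^2) * (t^2 + (p - 1)*t + (p - 1)^2)) := by
  have h₁ := (sq_add_mul_add_sq_pos hp0 t).ne'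
  have h₂ := (sq_add_mul_add_sq_pos (sub_ne_zero.2 hp1) t).ne'
  -- `field_simp` would rewrite the quadratics into a shape in which it no longer sees `h₁`, `h₂`.
  generalize hq₁ : t ^ 2 + p * t + p ^ 2 = q₁ at h₁ ⊢
  generalize hq₂ : t ^ 2 + (p - 1) * t + (p - 1) ^ 2 = q₂ at h₂ ⊢
  field_simp
  subst hq₁ hq₂
  ring

lemma ray_deriv_nonneg {p t : ℝ} (hp : 1 < p) (ht0 : 0 ≤ t) (ht1 : t ≤ 1) :
    0 ≤ -(t^2 * (t^2 - (2*p - 1)*t - 2*p^2 + 2*p)) /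
          (2 * p^2 * (t^2 + p*t + p^2) * (t^2 + (p - 1)*t + (p - 1)^2)) := by
  have hneg : t ^ 2 - (2 * p - 1) * t - 2 * p ^ 2 + 2 * p ≤ 0 := by nlinarith
  apply div_nonneg
  · nlinarith [mul_nonpos_of_nonneg_of_nonpos (sq_nonneg t) hneg]
  · have := sq_add_mul_add_sq_pos (by linarith : p ≠ 0) t
    have := sq_add_mul_add_sq_pos (by linarith : p - 1 ≠ 0) t
    positivity

theorem deriv_re_f_on_Sigma1 (γ : ℝ) (hγ : 1 < γ)
    (p μ : ℝ) (hp : p = γ / (γ - 1)) (hμ : μ = (1 - 1/γ)^2)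
    (f : ℂ → ℂ)
    (hf : ∀ z : ℂ, f z = -(μ:ℂ) * z + Complex.log z
        - (1/(γ:ℂ)^2) * Complex.log (z - 1))
    (t : ℝ) (ht0 : 0 ≤ t) (ht1 : t ≤ 1) :
    deriv (fun s : ℝ =>
        (f ((p:ℂ) + (s:ℂ) * Complex.exp (Real.pi * Complex.I / 3))).re) t
      = -(t^2 * (t^2 - (2*p - 1)*t - 2*p^2 + 2*p)) /
          (2 * p^2 * (t^2 + p*t + p^2) * (t^2 + (p - 1)*t + (p - 1)^2)) ∧
    0 ≤ deriv (fun s : ℝ =>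
        (f ((p:ℂ) + (s:ℂ) * Complex.exp (Real.pi * Complex.I / 3))).re) t := by
  have hp1 : 1 < p := by rw [hp, one_lt_div (by linarith)]; linarith
  have hinv : 1 / γ = (p - 1) / p := by
    rw [hp]; field_simp [(by linarith : γ - 1 ≠ 0)]; ring
  have hμp : μ = 1 / p ^ 2 := by rw [hμ, hinv]; field_simp; ring
  have hcp : 1 / γ ^ 2 = (p - 1) ^ 2 / p ^ 2 := by rw [← one_div_pow, hinv, div_pow]
  have hre : (fun s : ℝ ↦ (f (p + s * exp (π * I / 3))).re) = fun s : ℝ ↦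
      (-(μ : ℂ) * (p + s * exp (π * I / 3)) + log (p + s * exp (π * I / 3))
        - ((1 / γ ^ 2 : ℝ) : ℂ) * log (p + s * exp (π * I / 3) - 1)).re := by
    funext s; rw [hf]; push_cast; rfl
  have hD := hasDerivAt_re_along_ray μ (1 / γ ^ 2) (by linarith) hp1.ne' t
  rw [hre, hD.deriv, hμp, hcp, ray_deriv_eq_div (by linarith) hp1.ne']
  exact ⟨rfl, ray_deriv_nonneg hp1 ht0 ht1⟩
end

section
/- Let γ > 1, p = γ/(γ-1), μ = (1-1/γ)², and f(z) = -μ z + log z - (1/γ²) log(z-1). For ω = p + 1/2 + it with t ≥ √3/2, the derivative of Re(f(ω)) with respect to t equals t[(2p-1)t² + p(p-1) + (2p-1)/4] / (p² [t² + (p+1/2)²][t² + (p-1/2)²]), which is strictly positive; moreover there exists a constant C > 0 (depending only on γ) such that this derivative is at least C/t for all t ≥ √3/2; consequently Re(f(p+1/2+it)) - Re(f(p+1/2+i√3/2)) ≥ C log(t/(√3/2)) for all t ≥ √3/2. -/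
/-!
On the vertical line `z = x + it` the term `-μ z` has constant real part and
`Re log z = log (x² + t²) / 2`, so `d/dt Re f = t / |z|² - γ⁻² t / |z - 1|²`; with `x = p + 1/2`
and `γ⁻² = ((p - 1) / p)²` this is the stated rational function. Dropping the constant term of its
numerator, `t · d/dt Re f ≥ (2p - 1) / p² · t²/(t² + (p + 1/2)²) · t²/(t² + (p - 1/2)²)`, which
increases in `t`; its value `C` at `t = √3/2` gives `d/dt Re f ≥ C / t`, and integrating gives
the logarithmic growth.
-/

open Complex

theorem Complex.re_log_ofReal_add_mul_I (x y : ℝ) :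
    (log (x + y * I)).re = Real.log (x ^ 2 + y ^ 2) / 2 := by
  rw [log_re, norm_add_mul_I, Real.log_sqrt (by positivity)]

theorem hasDerivAt_re_log_ofReal_add_mul_I (x t : ℝ) (h : x ^ 2 + t ^ 2 ≠ 0) :
    HasDerivAt (fun s : ℝ => (log (x + s * I)).re) (t / (x ^ 2 + t ^ 2)) t := by
  simp only [re_log_ofReal_add_mul_I]
  refine ((((hasDerivAt_pow 2 t).const_add (x ^ 2)).log h).div_const 2).congr_deriv ?_
  push_cast
  ring

theorem hasDerivAt_re_vertical_of_eq_log_sub_log (μ κ x t : ℝ) (f : ℂ → ℂ)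
    (hf : ∀ z, f z = -(μ : ℂ) * z + log z - κ * log (z - 1))
    (h₀ : x ^ 2 + t ^ 2 ≠ 0) (h₁ : (x - 1) ^ 2 + t ^ 2 ≠ 0) :
    HasDerivAt (fun s : ℝ => (f (x + s * I)).re)
      (t / (x ^ 2 + t ^ 2) - κ * (t / ((x - 1) ^ 2 + t ^ 2))) t := by
  have hline : (fun s : ℝ => (f (x + s * I)).re) = fun s : ℝ =>
      -μ * x + (log (x + s * I)).re - κ * (log ((x - 1 : ℝ) + s * I)).re := by
    ext s
    rw [hf, show (x : ℂ) + s * I - 1 = (x - 1 : ℝ) + s * I by push_cast; ring]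
    simp
  rw [hline]
  exact ((hasDerivAt_re_log_ofReal_add_mul_I x t h₀).const_add (-μ * x)).sub
    ((hasDerivAt_re_log_ofReal_add_mul_I (x - 1) t h₁).const_mul κ)

theorem hasDerivAt_re_vertical_of_eq_log_sub_sq_div_log (μ p t : ℝ) (hp : 1 / 2 < p)
    (f : ℂ → ℂ)
    (hf : ∀ z, f z = -(μ : ℂ) * z + log z - ((p - 1) ^ 2 / p ^ 2 : ℝ) * log (z - 1)) :
    HasDerivAt (fun s : ℝ => (f (p + 1 / 2 + s * I)).re)
      (t * ((2 * p - 1) * t ^ 2 + p * (p - 1) + (2 * p - 1) / 4) /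
        (p ^ 2 * (t ^ 2 + (p + 1 / 2) ^ 2) * (t ^ 2 + (p - 1 / 2) ^ 2))) t := by
  have hp₀ : 0 < p := by linarith
  have hp₁ : 0 < p - 1 / 2 := by linarith
  have h := hasDerivAt_re_vertical_of_eq_log_sub_log μ _ (p + 1 / 2) t f hf
    (by positivity) (by rw [add_sub_assoc]; norm_num; positivity)
  rw [show p + 1 / 2 - 1 = p - 1 / 2 by ring] at h
  push_cast at h
  refine h.congr_deriv ?_
  rw [div_mul_div_comm, div_sub_div _ _ (by positivity) (by positivity),
    div_eq_div_iff (by positivity) (by positivity)]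
  ring

theorem div_add_le_div_add_of_le {m u a : ℝ} (hm : 0 < m) (ha : 0 ≤ a) (hmu : m ≤ u) :
    m / (m + a) ≤ u / (u + a) := by
  rw [div_le_div_iff₀ (by positivity) (by linarith)]
  nlinarith

theorem div_le_vertical_deriv (p m t : ℝ) (hp : 1 ≤ p) (hm : 0 < m) (hmt : m ≤ t) :
    (2 * p - 1) * (m ^ 2 / (m ^ 2 + (p + 1 / 2) ^ 2)) * (m ^ 2 / (m ^ 2 + (p - 1 / 2) ^ 2))
        / p ^ 2 / t ≤
      t * ((2 * p - 1) * t ^ 2 + p * (p - 1) + (2 * p - 1) / 4) /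
        (p ^ 2 * (t ^ 2 + (p + 1 / 2) ^ 2) * (t ^ 2 + (p - 1 / 2) ^ 2)) := by
  have hq : 0 ≤ 2 * p - 1 := by linarith
  have hK : 0 ≤ p * (p - 1) + (2 * p - 1) / 4 := by nlinarith
  have ht : 0 < t := hm.trans_le hmt
  have hm2 : m ^ 2 ≤ t ^ 2 := by gcongr
  calc _ ≤ (2 * p - 1) * (t ^ 2 / (t ^ 2 + (p + 1 / 2) ^ 2))
          * (t ^ 2 / (t ^ 2 + (p - 1 / 2) ^ 2)) / p ^ 2 / t := by
        gcongr (2 * p - 1) * ?_ * ?_ / _ / _ <;>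
          exact div_add_le_div_add_of_le (by positivity) (by positivity) hm2
    _ = t * ((2 * p - 1) * t ^ 2) /
        (p ^ 2 * (t ^ 2 + (p + 1 / 2) ^ 2) * (t ^ 2 + (p - 1 / 2) ^ 2)) := by
        field_simp
    _ ≤ _ := by gcongr; linarith

theorem mul_log_div_le_sub_of_div_le_deriv {g g' : ℝ → ℝ} {a C t : ℝ} (ha : 0 < a)
    (hg : ∀ x, a ≤ x → HasDerivAt g (g' x) x) (hC : ∀ x, a ≤ x → C / x ≤ g' x) (ht : a ≤ t) :
    C * Real.log (t / a) ≤ g t - g a := by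
  have hd : ∀ x, a ≤ x → HasDerivAt (fun x => g x - C * Real.log x) (g' x - C * x⁻¹) x :=
    fun x hx => (hg x hx).sub ((Real.hasDerivAt_log (by linarith)).const_mul C)
  have hmono : MonotoneOn (fun x => g x - C * Real.log x) (Set.Ici a) := by
    refine monotoneOn_of_hasDerivWithinAt_nonneg (convex_Ici a)
      (fun x hx => (hd x hx).continuousAt.continuousWithinAt)
      (fun x hx => (hd x (interior_subset hx)).hasDerivWithinAt) (fun x hx => ?_)
    have := hC x (interior_subset hx)
    rw [div_eq_mul_inv] at this
    linarith
  have hat : g a - C * Real.log a ≤ g t - C * Real.log t := hmono Set.self_mem_Ici ht ht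
  rw [Real.log_div (by linarith) ha.ne', mul_sub]
  linarith

theorem deriv_re_f_on_Sigma2_general (γ : ℝ) (hγ : 1 < γ)
    (p μ : ℝ) (hp : p = γ / (γ - 1))
    (f : ℂ → ℂ)
    (hf : ∀ z : ℂ, f z = -(μ:ℂ) * z + Complex.log z
        - (1/(γ:ℂ)^2) * Complex.log (z - 1)) :
    (∀ t : ℝ, Real.sqrt 3 / 2 ≤ t →
      deriv (fun s : ℝ => (f ((p:ℂ) + 1/2 + (s:ℂ) * Complex.I)).re) t
        = t * ((2*p - 1)*t^2 + p*(p - 1) + (2*p - 1)/4) /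
            (p^2 * (t^2 + (p + 1/2)^2) * (t^2 + (p - 1/2)^2)) ∧
      0 < deriv (fun s : ℝ => (f ((p:ℂ) + 1/2 + (s:ℂ) * Complex.I)).re) t) ∧
    ∃ C : ℝ, 0 < C ∧
      (∀ t : ℝ, Real.sqrt 3 / 2 ≤ t →
        C / t ≤ deriv (fun s : ℝ => (f ((p:ℂ) + 1/2 + (s:ℂ) * Complex.I)).re) t) ∧
      (∀ t : ℝ, Real.sqrt 3 / 2 ≤ t →
        C * Real.log (t / (Real.sqrt 3 / 2)) ≤
          (f ((p:ℂ) + 1/2 + (t:ℂ) * Complex.I)).re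
            - (f ((p:ℂ) + 1/2 + ((Real.sqrt 3 / 2 : ℝ):ℂ) * Complex.I)).re) := by
  have hp₁ : 1 < p := by rw [hp, one_lt_div (by linarith)]; linarith
  have hκ : 1 / (γ : ℂ) ^ 2 = (((p - 1) ^ 2 / p ^ 2 : ℝ) : ℂ) := by
    have : (γ : ℂ) - 1 ≠ 0 := by exact_mod_cast (show γ - 1 ≠ 0 by linarith)
    rw [hp]; push_cast; field_simp; ring
  have hderiv (t : ℝ) := hasDerivAt_re_vertical_of_eq_log_sub_sq_div_log μ p t (by linarith) f
    (fun z => by rw [hf, hκ])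
  set m := Real.sqrt 3 / 2
  have hm : 0 < m := by positivity
  set C := (2 * p - 1) * (m ^ 2 / (m ^ 2 + (p + 1 / 2) ^ 2)) *
    (m ^ 2 / (m ^ 2 + (p - 1 / 2) ^ 2)) / p ^ 2
  have hC : 0 < C := div_pos (mul_pos (mul_pos (by linarith) (by positivity)) (by positivity))
    (by positivity)
  have hle (t : ℝ) (ht : m ≤ t) := (hderiv t).deriv ▸ div_le_vertical_deriv p m t hp₁.le hm ht
  refine ⟨fun t ht => ⟨(hderiv t).deriv, (div_pos hC (hm.trans_le ht)).trans_le (hle t ht)⟩,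
    C, hC, hle, fun t ht => ?_⟩
  exact mul_log_div_le_sub_of_div_le_deriv hm
    (fun x _ => (hderiv x).differentiableAt.hasDerivAt) hle ht

theorem deriv_re_f_on_Sigma2 (γ : ℝ) (hγ : 1 < γ)
    (p μ : ℝ) (hp : p = γ / (γ - 1)) (hμ : μ = (1 - 1/γ)^2)
    (f : ℂ → ℂ)
    (hf : ∀ z : ℂ, f z = -(μ:ℂ) * z + Complex.log z
        - (1/(γ:ℂ)^2) * Complex.log (z - 1)) :
    (∀ t : ℝ, Real.sqrt 3 / 2 ≤ t →
      deriv (fun s : ℝ => (f ((p:ℂ) + 1/2 + (s:ℂ) * Complex.I)).re) t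
        = t * ((2*p - 1)*t^2 + p*(p - 1) + (2*p - 1)/4) /
            (p^2 * (t^2 + (p + 1/2)^2) * (t^2 + (p - 1/2)^2)) ∧
      0 < deriv (fun s : ℝ => (f ((p:ℂ) + 1/2 + (s:ℂ) * Complex.I)).re) t) ∧
    ∃ C : ℝ, 0 < C ∧
      (∀ t : ℝ, Real.sqrt 3 / 2 ≤ t →
        C / t ≤ deriv (fun s : ℝ => (f ((p:ℂ) + 1/2 + (s:ℂ) * Complex.I)).re) t) ∧
      (∀ t : ℝ, Real.sqrt 3 / 2 ≤ t →
        C * Real.log (t / (Real.sqrt 3 / 2)) ≤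
          (f ((p:ℂ) + 1/2 + (t:ℂ) * Complex.I)).re
            - (f ((p:ℂ) + 1/2 + ((Real.sqrt 3 / 2 : ℝ):ℂ) * Complex.I)).re) :=
  deriv_re_f_on_Sigma2_general γ hγ p μ hp f hf
end

section
/- Let γ > 1, p = γ/(γ-1), ν = (γ-1)^{4/3}/γ, f(z) = -(1-1/γ)² z + log z - (1/γ²) log(z-1), and C₀ = 1/4 + 4/(γ²(p-1)⁴). If 0 < δ < min{ν³/(6C₀), (p-1)/2}, then for all z with |z - p| < δ: |f(z) - f(p) - (f'''(p)/6)(z - p)³| ≤ C₀ |z - p|⁴ ≤ (ν³/6)|z - p|³. -/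
/-!
At `p = γ/(γ-1)` the first two derivatives of `f` vanish. The disc `‖z - p‖ < (p-1)/2` lies in
`Re z > (p+1)/2`, where `f` is holomorphic and `f⁗ z = -6/z⁴ + (6/γ²)/(z-1)⁴` is bounded by
`6 + 96/(γ²(p-1)⁴) = 24 C₀`. The Taylor remainder bound with the sharp factor `1/4!` comes from
integrating such bounds four times along radial segments; Mathlib's real Taylor theorem
`taylor_mean_remainder_bound` only gives `1/3!`.
-/

open Complex Set Metric Finset Nat

section Taylor

variable {F : Type*} [NormedAddCommGroup F] [NormedSpace ℂ F]

theorem norm_le_of_hasDerivAt_of_norm_deriv_le_pow {h h' : ℂ → F} {p : ℂ} {R M : ℝ} (k : ℕ)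
    (hd : ∀ w ∈ ball p R, HasDerivAt h (h' w) w)
    (hb : ∀ w ∈ ball p R, ‖h' w‖ ≤ M * ‖w - p‖ ^ k) (h0 : h p = 0)
    {z : ℂ} (hz : z ∈ ball p R) :
    ‖h z‖ ≤ M / (k + 1) * ‖z - p‖ ^ (k + 1) := by
  set r := ‖z - p‖
  set c : ℝ → ℂ := fun t => p + t • (z - p)
  have hc : ∀ t : ℝ, HasDerivAt c (z - p) t := fun t =>
    (((hasDerivAt_id t).smul_const (z - p)).const_add p).congr_deriv (one_smul ℝ _)
  have hc_dist : ∀ t : ℝ, 0 ≤ t → ‖c t - p‖ = t * r := fun t ht => by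
    simp [c, abs_of_nonneg ht, r]
  have hc_mem : ∀ t ∈ Icc (0 : ℝ) 1, c t ∈ ball p R := fun t ht => by
    rw [mem_ball, dist_eq_norm, hc_dist t ht.1]
    exact (mul_le_of_le_one_left (norm_nonneg _) ht.2).trans_lt (mem_ball_iff_norm.1 hz)
  have hφ : ∀ t ∈ Icc (0 : ℝ) 1, HasDerivAt (h ∘ c) ((z - p) • h' (c t)) t := fun t ht =>
    (hd (c t) (hc_mem t ht)).scomp t (hc t)
  have hB : ∀ t : ℝ, HasDerivAt (fun t => M * r ^ (k + 1) / (k + 1) * t ^ (k + 1))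
      (M * r ^ (k + 1) * t ^ k) t := fun t => by
    refine ((hasDerivAt_pow (k + 1) t).const_mul (M * r ^ (k + 1) / (k + 1))).congr_deriv ?_
    push_cast
    field_simp
  have key := image_norm_le_of_norm_deriv_right_le_deriv_boundary (a := 0) (b := 1)
    (fun t ht => (hφ t ht).continuousAt.continuousWithinAt)
    (fun t ht => (hφ t (Ico_subset_Icc_self ht)).hasDerivWithinAt)
    (by simp [c, h0]) hB (fun t ht => by
      rw [norm_smul]
      calc r * ‖h' (c t)‖ ≤ r * (M * (t * r) ^ k) := by
            gcongr
            rw [← hc_dist t ht.1]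
            exact hb _ (hc_mem t (Ico_subset_Icc_self ht))
        _ = M * r ^ (k + 1) * t ^ k := by ring)
    (right_mem_Icc.2 zero_le_one)
  simpa [c, mul_div_right_comm] using key

theorem hasDerivAt_taylor_monomial {𝕜 : Type*} [NontriviallyNormedField 𝕜] [CharZero 𝕜]
    (k : ℕ) (p v : 𝕜) :
    HasDerivAt (fun v => ((k + 1)! : 𝕜)⁻¹ * (v - p) ^ (k + 1)) ((k ! : 𝕜)⁻¹ * (v - p) ^ k) v := by
  refine ((((hasDerivAt_id v).sub_const p).fun_pow (k + 1)).const_mul _).congr_deriv ?_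
  rw [Nat.factorial_succ]
  push_cast
  field_simp
  simp

theorem norm_sub_taylor_le {D : ℕ → ℂ → F} {p : ℂ} {R M : ℝ} (n : ℕ)
    (hD : ∀ k ≤ n, ∀ w ∈ ball p R, HasDerivAt (D k) (D (k + 1) w) w)
    (hM : ∀ w ∈ ball p R, ‖D (n + 1) w‖ ≤ M) {z : ℂ} (hz : z ∈ ball p R) :
    ‖D 0 z - ∑ k ∈ range (n + 1), ((k ! : ℂ)⁻¹ * (z - p) ^ k) • D k p‖ ≤
      M / (n + 1)! * ‖z - p‖ ^ (n + 1) := by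
  induction n generalizing D z with
  | zero =>
    simpa using norm_le_of_hasDerivAt_of_norm_deriv_le_pow 0 (h := fun w => D 0 w - D 0 p)
      (fun w hw => (hD 0 le_rfl w hw).sub_const _) (by simpa using hM) (sub_self _) hz
  | succ n ih =>
    have hderiv : ∀ w ∈ ball p R, HasDerivAt
        (fun w => D 0 w - ∑ k ∈ range (n + 2), ((k ! : ℂ)⁻¹ * (w - p) ^ k) • D k p)
        (D 1 w - ∑ k ∈ range (n + 1), ((k ! : ℂ)⁻¹ * (w - p) ^ k) • D (k + 1) p) w := by
      intro w hw
      simp only [Finset.sum_range_succ' _ (n + 1), Nat.factorial_zero, Nat.cast_one, inv_one,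
        pow_zero, mul_one, one_smul]
      refine ((hD 0 (Nat.zero_le _) w hw).sub ((HasDerivAt.fun_sum fun k _ =>
        (hasDerivAt_taylor_monomial k p w).smul_const (D (k + 1) p)).add_const _)).congr_deriv ?_
      simp
    have := norm_le_of_hasDerivAt_of_norm_deriv_le_pow (n + 1) hderiv
      (fun w hw => ih (D := fun k => D (k + 1)) (fun k hk => hD (k + 1) (by omega)) hM hw)
      (by simp [Finset.sum_range_succ']) hz
    rw [Nat.factorial_succ (n + 1)]
    convert this using 2
    push_cast
    field_simp

theorem norm_sub_cubic_taylor_le {D : ℕ → ℂ → F} {p : ℂ} {R M : ℝ}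
    (hD : ∀ k ≤ 3, ∀ w ∈ ball p R, HasDerivAt (D k) (D (k + 1) w) w)
    (hM : ∀ w ∈ ball p R, ‖D 4 w‖ ≤ M) (h1 : D 1 p = 0) (h2 : D 2 p = 0)
    {z : ℂ} (hz : z ∈ ball p R) :
    ‖D 0 z - D 0 p - ((z - p) ^ 3 / 6) • D 3 p‖ ≤ M / 24 * ‖z - p‖ ^ 4 := by
  have h := norm_sub_taylor_le 3 hD hM hz
  simp only [Finset.sum_range_succ, Finset.sum_range_zero, h1, h2, smul_zero, add_zero,
    zero_add] at h
  norm_num [Nat.factorial, sub_sub, div_eq_inv_mul] at h ⊢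
  exact h

end Taylor

theorem iteratedDeriv_eqOn_of_hasDerivAt {𝕜 F : Type*} [NontriviallyNormedField 𝕜]
    [NormedAddCommGroup F] [NormedSpace 𝕜 F] {f : 𝕜 → F} {D : ℕ → 𝕜 → F} {U : Set 𝕜}
    (hU : IsOpen U) (h0 : EqOn f (D 0) U)
    (n : ℕ) (hD : ∀ k < n, ∀ w ∈ U, HasDerivAt (D k) (D (k + 1) w) w) :
    EqOn (iteratedDeriv n f) (D n) U := by
  induction n with
  | zero => simpa using h0
  | succ n ih =>
    intro w hw
    have hn := ih fun k hk => hD k (by omega)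
    rw [iteratedDeriv_succ, (hn.eventuallyEq_of_mem (hU.mem_nhds hw)).deriv_eq]
    exact (hD n n.lt_succ_self w hw).deriv

theorem hasDerivAt_inv_pow {𝕜 : Type*} [NontriviallyNormedField 𝕜] (k : ℕ) {w : 𝕜}
    (hw : w ≠ 0) :
    HasDerivAt (fun z => (z ^ k)⁻¹) (-k * (w ^ (k + 1))⁻¹) w := by
  refine ((hasDerivAt_pow k w).inv (pow_ne_zero k hw)).congr_deriv ?_
  rcases k with _ | k
  · simp
  · simp only [Nat.add_sub_cancel]
    field_simp
    ring

noncomputable def linLogDeriv (a b : ℂ) : ℕ → ℂ → ℂ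
  | 0 => fun w => -a * w + log w - b * log (w - 1)
  | 1 => fun w => -a + w⁻¹ - b * (w - 1)⁻¹
  | k + 2 => fun w => (-1) ^ (k + 1) * (k + 1)! * ((w ^ (k + 2))⁻¹ - b * ((w - 1) ^ (k + 2))⁻¹)

theorem hasDerivAt_linLogDeriv (a b : ℂ) (k : ℕ) {w : ℂ} (hw : 1 < w.re) :
    HasDerivAt (linLogDeriv a b k) (linLogDeriv a b (k + 1) w) w := by
  have hw0 : w ∈ slitPlane := mem_slitPlane_iff.2 (.inl (by linarith))
  have hw1 : w - 1 ∈ slitPlane := mem_slitPlane_iff.2 (.inl (by simpa using hw))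
  have hw0' := slitPlane_ne_zero hw0
  have hw1' := slitPlane_ne_zero hw1
  match k with
  | 0 =>
    have hlog := hasDerivAt_log hw0
    have hlog1 := (hasDerivAt_log hw1).comp_sub_const w 1
    simpa [linLogDeriv] using
      (((hasDerivAt_id w).const_mul (-a)).fun_add hlog).fun_sub (hlog1.const_mul b)
  | 1 =>
    have h1 := (hasDerivAt_inv hw1').comp_sub_const w 1
    refine (((hasDerivAt_inv hw0').const_add (-a)).sub (h1.const_mul b)).congr_deriv ?_
    simp only [linLogDeriv]
    ring
  | k + 2 =>
    have h1 := (hasDerivAt_inv_pow (k + 2) hw1').comp_sub_const w 1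
    refine (((hasDerivAt_inv_pow (k + 2) hw0').sub (h1.const_mul b)).const_mul
      ((-1) ^ (k + 1) * (k + 1)! : ℂ)).congr_deriv ?_
    simp only [linLogDeriv, Nat.factorial_succ (k + 1)]
    push_cast
    ring

theorem linLogDeriv_one_eq_zero {γ : ℂ} (hγ : γ ≠ 0) (hγ1 : γ ≠ 1) :
    linLogDeriv ((1 - 1 / γ) ^ 2) (1 / γ ^ 2) 1 (γ / (γ - 1)) = 0 := by
  have := sub_ne_zero.2 hγ1
  simp only [linLogDeriv]
  field_simp
  ring

theorem linLogDeriv_two_eq_zero (a : ℂ) {γ : ℂ} (hγ : γ ≠ 0) (hγ1 : γ ≠ 1) :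
    linLogDeriv a (1 / γ ^ 2) 2 (γ / (γ - 1)) = 0 := by
  have := sub_ne_zero.2 hγ1
  simp only [linLogDeriv]
  field_simp
  ring

theorem norm_linLogDeriv_four_le (a b : ℂ) {w : ℂ} {q : ℝ} (hq : 0 < q) (hw : q + 1 ≤ w.re) :
    ‖linLogDeriv a b 4 w‖ ≤ 6 * (1 + ‖b‖ / q ^ 4) := by
  have hw_norm : 1 ≤ ‖w‖ := by linarith [re_le_norm w]
  have hw1_norm : q ≤ ‖w - 1‖ := by linarith [re_le_norm (w - 1), sub_re w 1, one_re]
  have hinv : (‖w‖ ^ 4)⁻¹ ≤ 1 := inv_le_one_of_one_le₀ (one_le_pow₀ hw_norm)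
  have hinv1 : (‖w - 1‖ ^ 4)⁻¹ ≤ (q ^ 4)⁻¹ := inv_anti₀ (by positivity) (by gcongr)
  calc ‖linLogDeriv a b 4 w‖ = 6 * ‖(w ^ 4)⁻¹ - b * ((w - 1) ^ 4)⁻¹‖ := by
        simp [linLogDeriv, Nat.factorial]
    _ ≤ 6 * ((‖w‖ ^ 4)⁻¹ + ‖b‖ * (‖w - 1‖ ^ 4)⁻¹) := by
        gcongr
        exact (norm_sub_le _ _).trans_eq (by simp)
    _ ≤ 6 * (1 + ‖b‖ / q ^ 4) := by
        rw [div_eq_mul_inv]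
        gcongr

theorem sub_lt_re_of_mem_ball {c w : ℂ} {r : ℝ} (hw : w ∈ ball c r) : c.re - r < w.re := by
  have := (abs_re_le_norm (w - c)).trans_lt (mem_ball_iff_norm.1 hw)
  rw [sub_re] at this
  linarith [neg_abs_le (w.re - c.re)]

theorem mul_pow_succ_le_of_le_div {B C x : ℝ} (hC : 0 < C) (hx : 0 ≤ x) (hxB : x ≤ B / C)
    (n : ℕ) : C * x ^ (n + 1) ≤ B * x ^ n := by
  rw [le_div_iff₀ hC] at hxB
  calc C * x ^ (n + 1) = x * C * x ^ n := by ring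
    _ ≤ B * x ^ n := by gcongr

theorem taylor_cubic_bound_general (γ : ℝ) (hγ : 1 < γ)
    (p ν C₀ : ℝ) (hp : p = γ/(γ-1))
    (hC₀ : C₀ = 1/4 + 4/(γ^2 * (p - 1)^4))
    (f : ℂ → ℂ)
    (hf : ∀ z : ℂ, f z = -((1 - 1/γ)^2 : ℝ) * z + Complex.log z
        - (1/(γ:ℂ)^2) * Complex.log (z - 1))
    (δ : ℝ) (hδ1 : δ < min (ν^3/(6*C₀)) ((p - 1)/2))
    (z : ℂ) (hz : ‖z - (p:ℂ)‖ < δ) :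
    ‖f z - f (p:ℂ) - iteratedDeriv 3 f (p:ℂ) / 6 * (z - (p:ℂ))^3‖
      ≤ C₀ * ‖z - (p:ℂ)‖^4 ∧
    C₀ * ‖z - (p:ℂ)‖^4 ≤ ν^3/6 * ‖z - (p:ℂ)‖^3 := by
  have hp1 : 1 < p := by rw [hp, lt_div_iff₀ (by linarith)]; linarith
  obtain ⟨hδν, hδp⟩ := lt_min_iff.1 hδ1
  set D := linLogDeriv (((1 - 1 / γ) ^ 2 : ℝ) : ℂ) (1 / (γ : ℂ) ^ 2)
  have hre : ∀ w ∈ ball (p : ℂ) δ, (p + 1) / 2 < w.re := fun w hw => by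
    linarith [sub_lt_re_of_mem_ball hw, ofReal_re p]
  have hD : ∀ k, ∀ w ∈ ball (p : ℂ) δ, HasDerivAt (D k) (D (k + 1) w) w := fun k w hw =>
    hasDerivAt_linLogDeriv _ _ k (by linarith [hre w hw])
  have hD4 : ∀ w ∈ ball (p : ℂ) δ, ‖D 4 w‖ ≤ 24 * C₀ := fun w hw => by
    refine (norm_linLogDeriv_four_le _ _ (q := (p - 1) / 2) (by linarith)
      (by linarith [hre w hw])).trans_eq ?_
    rw [hC₀, norm_div, norm_one, norm_pow, norm_real, Real.norm_of_nonneg (by linarith)]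
    field_simp
    ring
  have hγ0 : (γ : ℂ) ≠ 0 := ofReal_ne_zero.2 (by linarith)
  have hγ1 : (γ : ℂ) ≠ 1 := ofReal_ne_one.2 hγ.ne'
  have hpc : (p : ℂ) = γ / (γ - 1) := by rw [hp, ofReal_div, ofReal_sub, ofReal_one]
  have hD1 : D 1 p = 0 := by
    rw [hpc]; simp only [D]; push_cast; exact linLogDeriv_one_eq_zero hγ0 hγ1
  have hD2 : D 2 p = 0 := by rw [hpc]; exact linLogDeriv_two_eq_zero _ hγ0 hγ1
  have hD3 : iteratedDeriv 3 f p = D 3 p :=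
    iteratedDeriv_eqOn_of_hasDerivAt isOpen_ball (fun w _ => hf w) 3 (fun k _ => hD k)
      (mem_ball_self ((norm_nonneg _).trans_lt hz))
  have hf0 : D 0 = f := funext fun w => (hf w).symm
  constructor
  · rw [hD3, ← hf0, show D 3 p / 6 * (z - p) ^ 3 = ((z - p) ^ 3 / 6) • D 3 p by
      rw [smul_eq_mul]; ring]
    exact (norm_sub_cubic_taylor_le (fun k _ => hD k) hD4 hD1 hD2
      (mem_ball_iff_norm.2 hz)).trans_eq (by ring)
  · exact mul_pow_succ_le_of_le_div (by rw [hC₀]; positivity) (norm_nonneg _)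
      (by rw [div_div]; exact hz.le.trans hδν.le) 3

theorem taylor_cubic_bound (γ : ℝ) (hγ : 1 < γ)
    (p ν C₀ : ℝ) (hp : p = γ/(γ-1)) (hν : ν = (γ - 1)^((4:ℝ)/3)/γ)
    (hC₀ : C₀ = 1/4 + 4/(γ^2 * (p - 1)^4))
    (f : ℂ → ℂ)
    (hf : ∀ z : ℂ, f z = -((1 - 1/γ)^2 : ℝ) * z + Complex.log z
        - (1/(γ:ℂ)^2) * Complex.log (z - 1))
    (δ : ℝ) (hδ0 : 0 < δ) (hδ1 : δ < min (ν^3/(6*C₀)) ((p - 1)/2))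
    (z : ℂ) (hz : ‖z - (p:ℂ)‖ < δ) :
    ‖f z - f (p:ℂ) - iteratedDeriv 3 f (p:ℂ) / 6 * (z - (p:ℂ))^3‖
      ≤ C₀ * ‖z - (p:ℂ)‖^4 ∧
    C₀ * ‖z - (p:ℂ)‖^4 ≤ ν^3/6 * ‖z - (p:ℂ)‖^3 :=
  taylor_cubic_bound_general γ hγ p ν C₀ hp hC₀ f hf δ hδ1 z hz
end

section
/- Let γ > 1, p = γ/(γ-1), ν = (γ-1)^{4/3}/γ, and f(z) = -(1-1/γ)² z + log z - (1/γ²) log(z-1). Suppose 0 < δ satisfies δ < min{ν³/(6C₀), (p-1)/2} where C₀ = 1/4 + 4/(γ²(p-1)⁴). Then for 0 < t < δ: Re(f(p + t e^{2πi/3}) - f(p)) ≤ -(ν³/6) t³, and Re(f(p + t e^{iπ/3}) - f(p)) ≥ (ν³/6) t³. -/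
/-!
Put `u = w / p` and `v = w / (p - 1)`. Then
`f (p + w) - f p = -(1 - 1/γ)² w + log (1 + u) - γ⁻² log (1 + v)`, and for `p = γ/(γ-1)` the
linear and quadratic terms of the Taylor expansions of the two logarithms cancel against each
other and the linear term, leaving `-(ν³/3) w³` plus a remainder of size at most `C₀ ‖w‖⁴`
(the standard bound on the tail of the logarithm series). For `‖w‖ = t < δ` this remainder is at
most `(ν³/6) t³`, half the cubic term; since `(t e^{2πi/3})³ = t³` and `(t e^{iπ/3})³ = -t³`,
the cubic term then dictates the sign of the real part.
-/

open Complex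

lemma logTaylor_four (z : ℂ) : logTaylor 4 z = z - z ^ 2 / 2 + z ^ 3 / 3 := by
  simp only [logTaylor, Finset.sum_range_succ, Finset.sum_range_zero]
  norm_num
  ring

lemma norm_log_add_sub_logTaylor_le {a : ℝ} (ha : 0 < a) {w : ℂ} (hw : ‖w‖ < a) (n : ℕ) :
    ‖log (a + w) - log a - logTaylor (n + 1) (w / a)‖ ≤
      ‖w‖ ^ (n + 1) / ((n + 1) * a ^ n * (a - ‖w‖)) := by
  have hwa : ‖w / a‖ = ‖w‖ / a := by rw [norm_div, norm_real, Real.norm_of_nonneg ha.le]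
  have hu : ‖w / a‖ < 1 := by rwa [hwa, div_lt_one ha]
  have hsplit : log (a + w) = log a + log (1 + w / a) := by
    have hne : (1 + w / a) ≠ 0 := by
      intro h
      rw [eq_neg_of_add_eq_zero_right h, norm_neg, norm_one] at hu
      exact lt_irrefl _ hu
    rw [← ofReal_log ha.le, ← log_ofReal_mul ha hne, mul_add, mul_one,
      mul_div_cancel₀ _ (ofReal_ne_zero.mpr ha.ne')]
  have hbound := norm_log_sub_logTaylor_le n hu
  rw [hsplit, add_sub_cancel_left]
  convert hbound using 1
  rw [hwa, div_pow]
  have : 0 < a - ‖w‖ := by linarith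
  field_simp
  ring

lemma logTaylor_combination {γ : ℂ} (h0 : γ ≠ 0) (h1 : γ - 1 ≠ 0) (w : ℂ) :
    -(1 - 1 / γ) ^ 2 * w + logTaylor 4 (w / (γ / (γ - 1)))
      - 1 / γ ^ 2 * logTaylor 4 (w / (γ / (γ - 1) - 1)) = -((γ - 1) ^ 4 / γ ^ 3 / 3) * w ^ 3 := by
  have h2 : γ / (γ - 1) - 1 = 1 / (γ - 1) := by field_simp; ring
  rw [logTaylor_four, logTaylor_four, h2]
  field_simp
  ring

noncomputable def logPotential (γ : ℝ) (z : ℂ) : ℂ :=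
  -((1 - 1 / γ) ^ 2 : ℝ) * z + log z - (1 / (γ : ℂ) ^ 2) * log (z - 1)

lemma logPotential_sub_add_cube {γ p : ℝ} (hγ : 1 < γ) (hp : p = γ / (γ - 1)) (w : ℂ) :
    logPotential γ (p + w) - logPotential γ p + ((γ - 1) ^ 4 / γ ^ 3 / 3 : ℝ) * w ^ 3 =
      (log (p + w) - log p - logTaylor 4 (w / p)) - 1 / (γ : ℂ) ^ 2 *
        (log ((p - 1 : ℝ) + w) - log (p - 1 : ℝ) - logTaylor 4 (w / (p - 1 : ℝ))) := by
  have h0 : (γ : ℂ) ≠ 0 := ofReal_ne_zero.mpr (by linarith)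
  have h1 : (γ : ℂ) - 1 ≠ 0 := by
    rw [← ofReal_one, ← ofReal_sub]; exact ofReal_ne_zero.mpr (by linarith)
  have hcomb := logTaylor_combination h0 h1 w
  have hpc : (p : ℂ) = γ / (γ - 1) := by rw [hp]; push_cast; rfl
  have hshift : (p : ℂ) + w - 1 = ((p - 1 : ℝ) : ℂ) + w := by push_cast; ring
  have hshift' : (p : ℂ) - 1 = ((p - 1 : ℝ) : ℂ) := by push_cast; ring
  simp only [logPotential, hshift, hshift']
  rw [← hpc] at hcomb
  push_cast at hcomb ⊢
  linear_combination hcomb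

lemma norm_logPotential_sub_add_cube_le {γ p : ℝ} (hγ : 1 < γ) (hp : p = γ / (γ - 1)) {w : ℂ}
    (hw : ‖w‖ < (p - 1) / 2) :
    ‖logPotential γ (p + w) - logPotential γ p + ((γ - 1) ^ 4 / γ ^ 3 / 3 : ℝ) * w ^ 3‖ ≤
      (1 / 4 + 4 / (γ ^ 2 * (p - 1) ^ 4)) * ‖w‖ ^ 4 := by
  have hp1 : 0 < p - 1 := by
    have : p - 1 = 1 / (γ - 1) := by rw [hp]; field_simp [show γ - 1 ≠ 0 by linarith]; ring
    rw [this]; exact one_div_pos.mpr (by linarith)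
  have hR₁ : ‖log (p + w) - log p - logTaylor 4 (w / p)‖ ≤ ‖w‖ ^ 4 / 4 := by
    refine (norm_log_add_sub_logTaylor_le (by linarith) (by linarith) 3).trans ?_
    norm_num only
    gcongr
    nlinarith [one_le_pow₀ (n := 3) (by linarith : 1 ≤ p)]
  have hR₂ : ‖log ((p - 1 : ℝ) + w) - log (p - 1 : ℝ) - logTaylor 4 (w / (p - 1 : ℝ))‖ ≤
      ‖w‖ ^ 4 / ((p - 1) ^ 4 / 4) := by
    refine (norm_log_add_sub_logTaylor_le hp1 (by linarith) 3).trans ?_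
    norm_num only
    gcongr
    nlinarith [pow_pos hp1 3]
  have hγ2 : ‖1 / (γ : ℂ) ^ 2‖ = 1 / γ ^ 2 := by
    rw [norm_div, norm_one, norm_pow, norm_real, Real.norm_of_nonneg (by linarith)]
  rw [logPotential_sub_add_cube hγ hp]
  calc _ ≤ _ := norm_sub_le _ _
    _ ≤ ‖w‖ ^ 4 / 4 + 1 / γ ^ 2 * (‖w‖ ^ 4 / ((p - 1) ^ 4 / 4)) := by
      rw [norm_mul, hγ2]
      gcongr
    _ = _ := by field_simp

lemma exp_two_pi_mul_I_div_three_pow_three : exp (2 * Real.pi * I / 3) ^ 3 = 1 := by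
  rw [← exp_nat_mul, ← exp_two_pi_mul_I]
  congr 1
  push_cast
  ring

lemma exp_pi_mul_I_div_three_pow_three : exp (Real.pi * I / 3) ^ 3 = -1 := by
  rw [← exp_nat_mul, ← exp_pi_mul_I]
  congr 1
  push_cast
  ring

lemma re_le_of_norm_add_cube_le {z w : ℂ} {c t : ℝ} (hR : ‖z + (2 * c : ℝ) * w ^ 3‖ ≤ c * t ^ 3)
    (hw : w ^ 3 = (t : ℂ) ^ 3) : z.re ≤ -c * t ^ 3 := by
  have hre := (re_le_norm _).trans hR
  rw [hw, ← ofReal_pow, ← ofReal_mul, add_re, ofReal_re] at hre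
  linarith

lemma le_re_of_norm_add_cube_le {z w : ℂ} {c t : ℝ} (hR : ‖z + (2 * c : ℝ) * w ^ 3‖ ≤ c * t ^ 3)
    (hw : w ^ 3 = -(t : ℂ) ^ 3) : c * t ^ 3 ≤ z.re := by
  have hre := (neg_le_of_abs_le (abs_re_le_norm _)).trans' (neg_le_neg hR)
  rw [hw, ← ofReal_pow, mul_neg, ← ofReal_mul, add_re, neg_re, ofReal_re] at hre
  linarith

theorem re_f_cubic_estimates_general (γ : ℝ) (hγ : 1 < γ)
    (p ν C₀ : ℝ) (hp : p = γ/(γ-1)) (hν : ν = (γ - 1)^((4:ℝ)/3)/γ)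
    (hC₀ : C₀ = 1/4 + 4/(γ^2 * (p - 1)^4))
    (f : ℂ → ℂ)
    (hf : ∀ z : ℂ, f z = -((1 - 1/γ)^2 : ℝ) * z + Complex.log z
        - (1/(γ:ℂ)^2) * Complex.log (z - 1))
    (δ : ℝ) (hδ1 : δ < min (ν^3/(6*C₀)) ((p - 1)/2))
    (t : ℝ) (ht0 : 0 < t) (ht1 : t < δ) :
    (f ((p:ℂ) + (t:ℂ) * Complex.exp (2 * Real.pi * Complex.I / 3))
        - f (p:ℂ)).re ≤ -(ν^3/6) * t^3 ∧
    (ν^3/6) * t^3 ≤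
      (f ((p:ℂ) + (t:ℂ) * Complex.exp (Real.pi * Complex.I / 3))
        - f (p:ℂ)).re := by
  obtain rfl : f = logPotential γ := funext hf
  have hν3 : 2 * (ν ^ 3 / 6) = (γ - 1) ^ 4 / γ ^ 3 / 3 := by
    rw [hν, div_pow, ← Real.rpow_mul_natCast (by linarith)]
    norm_num
    ring
  have hC₀pos : 0 < C₀ := by rw [hC₀]; positivity
  obtain ⟨htν, htp⟩ : t * C₀ < ν ^ 3 / 6 ∧ t < (p - 1) / 2 := by
    rw [lt_min_iff, lt_div_iff₀ (by positivity)] at hδ1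
    constructor <;> nlinarith
  have hR : ∀ ω : ℂ, ‖ω‖ = 1 → ‖logPotential γ (p + t * ω) - logPotential γ p +
      (2 * (ν ^ 3 / 6) : ℝ) * (t * ω) ^ 3‖ ≤ ν ^ 3 / 6 * t ^ 3 := by
    intro ω hω
    have hnorm : ‖(t : ℂ) * ω‖ = t := by
      rw [norm_mul, hω, mul_one, norm_real, Real.norm_of_nonneg ht0.le]
    rw [hν3]
    calc _ ≤ C₀ * ‖(t : ℂ) * ω‖ ^ 4 := by
          rw [hC₀]; exact norm_logPotential_sub_add_cube_le hγ hp (by rwa [hnorm])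
      _ ≤ ν ^ 3 / 6 * t ^ 3 := by rw [hnorm]; nlinarith [pow_pos ht0 3]
  exact ⟨re_le_of_norm_add_cube_le (hR _ (by simp [norm_exp]))
      (by rw [mul_pow, exp_two_pi_mul_I_div_three_pow_three, mul_one]),
    le_re_of_norm_add_cube_le (hR _ (by simp [norm_exp]))
      (by rw [mul_pow, exp_pi_mul_I_div_three_pow_three, mul_neg_one])⟩

theorem re_f_cubic_estimates (γ : ℝ) (hγ : 1 < γ)
    (p ν C₀ : ℝ) (hp : p = γ/(γ-1)) (hν : ν = (γ - 1)^((4:ℝ)/3)/γ)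
    (hC₀ : C₀ = 1/4 + 4/(γ^2 * (p - 1)^4))
    (f : ℂ → ℂ)
    (hf : ∀ z : ℂ, f z = -((1 - 1/γ)^2 : ℝ) * z + Complex.log z
        - (1/(γ:ℂ)^2) * Complex.log (z - 1))
    (δ : ℝ) (hδ0 : 0 < δ) (hδ1 : δ < min (ν^3/(6*C₀)) ((p - 1)/2))
    (t : ℝ) (ht0 : 0 < t) (ht1 : t < δ) :
    (f ((p:ℂ) + (t:ℂ) * Complex.exp (2 * Real.pi * Complex.I / 3))
        - f (p:ℂ)).re ≤ -(ν^3/6) * t^3 ∧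
    (ν^3/6) * t^3 ≤
      (f ((p:ℂ) + (t:ℂ) * Complex.exp (Real.pi * Complex.I / 3))
        - f (p:ℂ)).re :=
  re_f_cubic_estimates_general γ hγ p ν C₀ hp hν hC₀ f hf δ hδ1 t ht0 ht1
end
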